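/- Let G be a simple graph on a finite vertex set and let NM(G) = A·L be its neighbourhood matrix. Consider the set S of ordered quadruples (a,b,c,d) of vertices with a adjacent to b, b adjacent to c, c adjacent to d, d adjacent to a, a ≠ c and b ≠ d (so each quadruple traces a 4-cycle, induced or not, each 4-cycle arising from exactly 8 quadruples). Then |S| = 2·∑_i ( ∑_{j ∈ N(i)} C(|NM(G)[j,j]| − NM(G)[i,j], 2) + ∑_{j ∉ N(i), j ≠ i} C(|NM(G)[i,j]|, 2) ), where C(m,2) denotes the binomial coefficient m choose 2, the quantity |NM(G)[j,j]| − NM(G)[i,j] is interpreted as a natural number, and |NM(G)[i,j]| denotes the absolute value of the entry. -/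

import Mathlib

/-!
Writing `A` for the adjacency matrix, `(A * L) i j = A i j * deg j - c(i, j)`, where `c(i, j)` is
the number of common neighbours of `i` and `j`; in particular `(A * L) j j = -deg j`. Hence both
kinds of summand on the right are `C(c(i, j), 2)`, and the right-hand side is
`2 ∑_{i ≠ j} C(c(i, j), 2)`. On the left, a quadruple `(a, b, c, d)` is the same as an ordered pair
`a ≠ c` together with an ordered pair of distinct common neighbours `(b, d)` of `a` and `c`, of
which there are `c(a, c) (c(a, c) - 1) = 2 C(c(a, c), 2)`.
-/

open Finset

namespace Finset

theorem sum_offDiag_univ {α M : Type*} [Fintype α] [DecidableEq α] [AddCommMonoid M]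
    (f : α × α → M) : ∑ p ∈ univ.offDiag, f p = ∑ i, ∑ j with i ≠ j, f (i, j) :=
  sum_finset_product _ _ _ fun p => by simp

theorem card_offDiag_eq_two_mul_choose_two {α : Type*} [DecidableEq α] (s : Finset α) :
    #s.offDiag = 2 * (#s).choose 2 := by
  rw [← Sym2.two_mul_card_image_offDiag, Sym2.card_image_offDiag]

end Finset

namespace SimpleGraph

variable {V : Type*} [Fintype V] [DecidableEq V] (G : SimpleGraph V) [DecidableRel G.Adj]

theorem adjMatrix_mul_self_apply {α : Type*} [NonAssocSemiring α] (i j : V) :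
    (G.adjMatrix α * G.adjMatrix α) i j = #(G.neighborFinset i ∩ G.neighborFinset j) := by
  rw [adjMatrix_mul_apply, ← filter_mem_eq_inter, ← sum_boole]
  simp [adjMatrix_apply, G.adj_comm _ j]

theorem adjMatrix_mul_lapMatrix_apply {R : Type*} [NonAssocRing R] (i j : V) :
    (G.adjMatrix R * G.lapMatrix R) i j =
      (if G.Adj i j then (G.degree j : R) else 0) -
        #(G.neighborFinset i ∩ G.neighborFinset j) := by
  rw [lapMatrix, Matrix.mul_sub, Matrix.sub_apply, degMatrix, Matrix.mul_diagonal,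
    adjMatrix_mul_self_apply, adjMatrix_apply, ite_mul, one_mul, zero_mul]

theorem adjMatrix_mul_lapMatrix_apply_self {R : Type*} [NonAssocRing R] (i : V) :
    (G.adjMatrix R * G.lapMatrix R) i i = -G.degree i := by
  rw [adjMatrix_mul_lapMatrix_apply, if_neg (G.irrefl (v := i)), inter_self,
    card_neighborFinset_eq_degree, zero_sub]

theorem card_cyclic_quadruples_eq_sum_card_offDiag :
    #{q : V × V × V × V | G.Adj q.1 q.2.1 ∧ G.Adj q.2.1 q.2.2.1 ∧ G.Adj q.2.2.1 q.2.2.2 ∧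
        G.Adj q.2.2.2 q.1 ∧ q.1 ≠ q.2.2.1 ∧ q.2.1 ≠ q.2.2.2} =
      ∑ p ∈ univ.offDiag, #(G.neighborFinset p.1 ∩ G.neighborFinset p.2).offDiag := by
  rw [← card_sigma]
  refine card_nbij' (fun q => ⟨(q.1, q.2.2.1), (q.2.1, q.2.2.2)⟩)
    (fun x => (x.1.1, x.2.1, x.1.2, x.2.2)) ?_ ?_ ?_ ?_
  · intro q hq
    simp only [mem_coe, mem_filter, mem_univ, true_and] at hq
    simp only [mem_coe, mem_sigma, mem_offDiag, mem_univ, true_and, mem_inter,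
      mem_neighborFinset]
    grind [G.adj_comm]
  · rintro ⟨⟨a, c⟩, ⟨b, d⟩⟩ h
    simp only [mem_coe, mem_sigma, mem_offDiag, mem_univ, true_and, mem_inter,
      mem_neighborFinset] at h
    simp only [mem_coe, mem_filter, mem_univ, true_and]
    grind [G.adj_comm]
  · intro q _; rfl
  · intro x _; rfl

theorem toNat_abs_sub_adjMatrix_mul_lapMatrix_of_adj {i j : V} (h : G.Adj i j) :
    (|(G.adjMatrix ℤ * G.lapMatrix ℤ) j j| - (G.adjMatrix ℤ * G.lapMatrix ℤ) i j).toNat =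
      #(G.neighborFinset i ∩ G.neighborFinset j) := by
  rw [adjMatrix_mul_lapMatrix_apply_self, adjMatrix_mul_lapMatrix_apply, if_pos h, abs_neg,
    Nat.abs_cast, sub_sub_cancel, Int.toNat_natCast]

theorem natAbs_adjMatrix_mul_lapMatrix_of_not_adj {i j : V} (h : ¬G.Adj i j) :
    ((G.adjMatrix ℤ * G.lapMatrix ℤ) i j).natAbs =
      #(G.neighborFinset i ∩ G.neighborFinset j) := by
  rw [adjMatrix_mul_lapMatrix_apply, if_neg h, zero_sub, Int.natAbs_neg, Int.natAbs_natCast]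

theorem sum_neighborFinset_add_sum_not_adj {M : Type*} [AddCommMonoid M] (f : V → M) (i : V) :
    ∑ j ∈ G.neighborFinset i, f j + ∑ j with j ∉ G.neighborFinset i ∧ j ≠ i, f j =
      ∑ j with i ≠ j, f j := by
  rw [← sum_union]
  · congr 1
    ext j
    simp only [mem_union, mem_filter, mem_univ, true_and, mem_neighborFinset]
    grind [G.ne_of_adj]
  · exact Finset.disjoint_left.mpr fun _ hj hj' => (mem_filter.mp hj').2.1 hj

end SimpleGraph

theorem four_cycle_count_nm {V : Type*} [Fintype V] [DecidableEq V]
    (G : SimpleGraph V) [DecidableRel G.Adj] :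
    ((Finset.univ.filter (fun q : V × V × V × V =>
        G.Adj q.1 q.2.1 ∧ G.Adj q.2.1 q.2.2.1 ∧ G.Adj q.2.2.1 q.2.2.2 ∧
        G.Adj q.2.2.2 q.1 ∧ q.1 ≠ q.2.2.1 ∧ q.2.1 ≠ q.2.2.2)).card) =
      2 * ∑ i : V,
        ((∑ j ∈ G.neighborFinset i,
            Nat.choose (|(G.adjMatrix ℤ * G.lapMatrix ℤ) j j|
              - (G.adjMatrix ℤ * G.lapMatrix ℤ) i j).toNat 2) +
         (∑ j ∈ Finset.univ.filter (fun j : V => j ∉ G.neighborFinset i ∧ j ≠ i),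
            Nat.choose ((G.adjMatrix ℤ * G.lapMatrix ℤ) i j).natAbs 2)) := by
  have h_summand : ∀ i : V,
      (∑ j ∈ G.neighborFinset i,
          Nat.choose (|(G.adjMatrix ℤ * G.lapMatrix ℤ) j j|
            - (G.adjMatrix ℤ * G.lapMatrix ℤ) i j).toNat 2) +
        (∑ j ∈ Finset.univ.filter (fun j : V => j ∉ G.neighborFinset i ∧ j ≠ i),
          Nat.choose ((G.adjMatrix ℤ * G.lapMatrix ℤ) i j).natAbs 2) =
      ∑ j with i ≠ j, (#(G.neighborFinset i ∩ G.neighborFinset j)).choose 2 := by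
    intro i
    rw [← G.sum_neighborFinset_add_sum_not_adj]
    congr 1 <;> refine sum_congr rfl fun j hj => ?_
    · rw [G.toNat_abs_sub_adjMatrix_mul_lapMatrix_of_adj ((G.mem_neighborFinset i j).mp hj)]
    · rw [G.natAbs_adjMatrix_mul_lapMatrix_of_not_adj
        (mt (G.mem_neighborFinset i j).mpr (mem_filter.mp hj).2.1)]
  simp_rw [h_summand, G.card_cyclic_quadruples_eq_sum_card_offDiag,
    card_offDiag_eq_two_mul_choose_two, sum_offDiag_univ, mul_sum]
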